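/- arXiv:1701.01282 — 16 statements merged into one kernel-verified Lean document; each statement's English description precedes it below -/
import Mathlib

section
/- A semigroup F is a group if and only if the ordered semigroup P_f(F) of nonempty finite subsets of F is t-simple, i.e., for all A, B ∈ P_f(F) there exist X, Y ∈ P_f(F) with A ⊆ X·B and A ⊆ B·Y. -/
open Pointwise

/-- a semigroup `F` is a group (the equations `a = x*b`, `a = b*y` are
solvable) iff the ordered semigroup of nonempty finite subsets of `F` is t-simple. -/
theorem group_iff_pf_tsimple {F : Type*} [Semigroup F] [DecidableEq F] :
    (∀ a b : F, (∃ x : F, a = x * b) ∧ (∃ y : F, a = b * y)) ↔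
    (∀ A B : Finset F, A.Nonempty → B.Nonempty →
      ∃ X Y : Finset F, X.Nonempty ∧ Y.Nonempty ∧ A ⊆ X * B ∧ A ⊆ B * Y) := by
  constructor
  · intro h A B hA hB
    obtain ⟨b, hb⟩ := hB
    refine ⟨A.image (fun a => (h a b).1.choose), A.image (fun a => (h a b).2.choose),
      hA.image _, hA.image _, ?_, ?_⟩
    · intro a ha
      have := (h a b).1.choose_spec
      exact Finset.mem_mul.2 ⟨_, Finset.mem_image_of_mem _ ha, b, hb, this.symm⟩
    · intro a ha
      have := (h a b).2.choose_spec
      exact Finset.mem_mul.2 ⟨b, hb, _, Finset.mem_image_of_mem _ ha, this.symm⟩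
  · intro h a b
    obtain ⟨X, Y, hX, hY, h1, h2⟩ := h {a} {b} ⟨a, Finset.mem_singleton_self a⟩
      ⟨b, Finset.mem_singleton_self b⟩
    constructor
    · obtain ⟨x, hx, c, hc, hxc⟩ := Finset.mem_mul.1 (h1 (Finset.mem_singleton_self a))
      exact ⟨x, by rw [Finset.mem_singleton] at hc; rw [hc] at hxc; exact hxc.symm⟩
    · obtain ⟨c, hc, y, hy, hcy⟩ := Finset.mem_mul.1 (h2 (Finset.mem_singleton_self a))
      exact ⟨y, by rw [Finset.mem_singleton] at hc; rw [hc] at hcy; exact hcy.symm⟩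
end

section
/- An ordered semigroup S is group like if and only if for all a, b ∈ S there exists s ∈ S with a ≤ bsb. -/
/-- `S` is group like iff `a ∈ (bSb]` for all `a, b ∈ S`. -/
theorem grouplike_iff {S : Type*} [Semigroup S] [PartialOrder S]
    [CovariantClass S S (· * ·) (· ≤ ·)]
    [CovariantClass S S (Function.swap (· * ·)) (· ≤ ·)] :
    (∀ a b : S, ∃ x y : S, a ≤ x * b ∧ a ≤ b * y) ↔
    (∀ a b : S, ∃ s : S, a ≤ b * s * b) := by
  constructor
  · intro h a b
    obtain ⟨x, -, hx, -⟩ := h a b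
    obtain ⟨-, y, -, hy⟩ := h x b
    exact ⟨y, hx.trans (mul_le_mul_left hy b)⟩
  · intro h a b
    obtain ⟨s, hs⟩ := h a b
    exact ⟨b * s, s * b, hs, by rwa [← mul_assoc]⟩
end

section
/- Let S be a regular ordered semigroup, L a left ideal of S, and e an ordered idempotent. Then L ∩ (eS] = (eL], where (H] = {t ∈ S : t ≤ h for some h ∈ H}. -/
/-- in a regular ordered semigroup, for a left ideal `L` and an
ordered idempotent `e`, `L ∩ (eS] = (eL]`. -/
theorem leftideal_inter_eS {S : Type*} [Semigroup S] [PartialOrder S]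
    [CovariantClass S S (· * ·) (· ≤ ·)]
    [CovariantClass S S (Function.swap (· * ·)) (· ≤ ·)]
    (hreg : ∀ a : S, ∃ x : S, a ≤ a * x * a)
    (L : Set S) (hL : L.Nonempty)
    (hLmul : ∀ s x : S, x ∈ L → s * x ∈ L)
    (hLdown : ∀ t x : S, x ∈ L → t ≤ x → t ∈ L)
    (e : S) (he : e ≤ e * e) :
    L ∩ {t : S | ∃ s : S, t ≤ e * s} = {t : S | ∃ x ∈ L, t ≤ e * x} := by
  ext t
  constructor
  · rintro ⟨htL, s, hts⟩
    obtain ⟨x, hx⟩ := hreg t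
    refine ⟨s * x * t, hLmul _ _ htL, ?_⟩
    calc t ≤ t * x * t := hx
      _ ≤ e * s * x * t := by
          exact mul_le_mul_left (mul_le_mul_left hts x) t
      _ = e * (s * x * t) := by simp [mul_assoc]
  · rintro ⟨x, hxL, htx⟩
    exact ⟨hLdown _ _ (hLmul e x hxL) htx, x, htx⟩
end

section
/- Let S be a regular ordered semigroup and e, f ordered idempotents. Then (Sf] ∩ (eS] = (eSf]. -/
/-- in a regular ordered semigroup, `(Sf] ∩ (eS] = (eSf]` for ordered
idempotents `e, f`. -/
theorem Sf_inter_eS_eq_eSf {S : Type*} [Semigroup S] [PartialOrder S]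
    [CovariantClass S S (· * ·) (· ≤ ·)]
    [CovariantClass S S (Function.swap (· * ·)) (· ≤ ·)]
    (hreg : ∀ a : S, ∃ x : S, a ≤ a * x * a)
    (e f : S) (he : e ≤ e * e) (hf : f ≤ f * f) :
    {t : S | ∃ s : S, t ≤ s * f} ∩ {t : S | ∃ s : S, t ≤ e * s} =
      {t : S | ∃ s : S, t ≤ e * s * f} := by
  ext t
  constructor
  · rintro ⟨⟨s, hs⟩, ⟨s', hs'⟩⟩
    obtain ⟨x, hx⟩ := hreg t
    refine ⟨s' * x * s, ?_⟩
    calc t ≤ t * x * t := hx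
      _ ≤ (e * s') * x * (s * f) :=
        mul_le_mul' (mul_le_mul' hs' le_rfl) hs
      _ = e * (s' * x * s) * f := by simp [mul_assoc]
  · rintro ⟨s, hs⟩
    exact ⟨⟨e * s, hs.trans (by simp [mul_assoc])⟩, ⟨s * f, hs.trans (by simp [mul_assoc])⟩⟩
end

section
/- A regular ordered semigroup S is group like if and only if any two ordered idempotents e, f of S are H-related, i.e., each of e, f lies in (Sf]∩(fS] and (Se]∩(eS] respectively (equivalently e ≤ xf, e ≤ fy, f ≤ ue, f ≤ ev for some x, y, u, v ∈ S). -/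
/-- a regular ordered semigroup is group like iff any two ordered
idempotents are H-related. -/
theorem grouplike_iff_idempotents_Hrelated {S : Type*} [Semigroup S] [PartialOrder S]
    [CovariantClass S S (· * ·) (· ≤ ·)]
    [CovariantClass S S (Function.swap (· * ·)) (· ≤ ·)]
    (hreg : ∀ a : S, ∃ x : S, a ≤ a * x * a) :
    (∀ a b : S, ∃ x y : S, a ≤ x * b ∧ a ≤ b * y) ↔
    (∀ e f : S, e ≤ e * e → f ≤ f * f →
      (∃ x : S, e ≤ x * f) ∧ (∃ y : S, e ≤ f * y) ∧
      (∃ u : S, f ≤ u * e) ∧ (∃ v : S, f ≤ e * v)) := by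
  constructor
  · intro h e f _ _
    obtain ⟨x, y, h1, h2⟩ := h e f
    obtain ⟨u, v, h3, h4⟩ := h f e
    exact ⟨⟨x, h1⟩, ⟨y, h2⟩, ⟨u, h3⟩, ⟨v, h4⟩⟩
  · intro h a b
    obtain ⟨x, hx⟩ := hreg a
    obtain ⟨y, hy⟩ := hreg b
    -- x*a and a*x are ordered idempotents, similarly y*b and b*y
    have hxa : x * a ≤ (x * a) * (x * a) := by
      calc x * a ≤ x * (a * x * a) := mul_le_mul_right hx x
        _ = (x * a) * (x * a) := by simp [mul_assoc]
    have hax : a * x ≤ (a * x) * (a * x) := by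
      calc a * x ≤ (a * x * a) * x := mul_le_mul_left hx x
        _ = (a * x) * (a * x) := by simp [mul_assoc]
    have hyb : y * b ≤ (y * b) * (y * b) := by
      calc y * b ≤ y * (b * y * b) := mul_le_mul_right hy y
        _ = (y * b) * (y * b) := by simp [mul_assoc]
    have hby : b * y ≤ (b * y) * (b * y) := by
      calc b * y ≤ (b * y * b) * y := mul_le_mul_left hy y
        _ = (b * y) * (b * y) := by simp [mul_assoc]
    obtain ⟨⟨u, hu⟩, -, -, -⟩ := h (x * a) (y * b) hxa hyb
    obtain ⟨-, ⟨v, hv⟩, -, -⟩ := h (a * x) (b * y) hax hby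
    refine ⟨a * u * y, y * v * a, ?_, ?_⟩
    · calc a ≤ a * x * a := hx
        _ = a * (x * a) := by rw [mul_assoc]
        _ ≤ a * (u * (y * b)) := mul_le_mul_right hu a
        _ = a * u * y * b := by simp [mul_assoc]
    · calc a ≤ a * x * a := hx
        _ = (a * x) * a := rfl
        _ ≤ ((b * y) * v) * a := mul_le_mul_left hv a
        _ = b * (y * v * a) := by simp [mul_assoc]
end

section
/- Let S be a regular ordered semigroup. Then any two inverses a', a'' of an element a ∈ S are H-related if and only if for every pair of ordered idempotents e, f there exists x ∈ S with ef ≤ fxe. -/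
/-- in a regular ordered semigroup, any two inverses of each element
are H-related iff for all ordered idempotents `e, f` there is `x` with `ef ≤ fxe`. -/
theorem inverses_Hrelated_iff {S : Type*} [Semigroup S] [PartialOrder S]
    [CovariantClass S S (· * ·) (· ≤ ·)]
    [CovariantClass S S (Function.swap (· * ·)) (· ≤ ·)]
    (hreg : ∀ a : S, ∃ b : S, a ≤ a * b * a ∧ b ≤ b * a * b) :
    (∀ a a' a'' : S,
        (a ≤ a * a' * a ∧ a' ≤ a' * a * a') →
        (a ≤ a * a'' * a ∧ a'' ≤ a'' * a * a'') →
        (∃ s : S, a' ≤ s * a'') ∧ (∃ t : S, a'' ≤ t * a') ∧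
        (∃ u : S, a' ≤ a'' * u) ∧ (∃ v : S, a'' ≤ a' * v)) ↔
    (∀ e f : S, e ≤ e * e → f ≤ f * f → ∃ x : S, e * f ≤ f * x * e) := by
  constructor
  · -- forward direction
    intro h e f he hf
    obtain ⟨x, hx1, hx2⟩ := hreg (e * f)
    -- c = f*x*e is an inverse of e*f and also of itself
    have hcc : f * x * e ≤ (f * x * e) * (f * x * e) := by
      simpa only [mul_assoc] using mul_le_mul_left (mul_le_mul_right hx2 f) e
    have hccc : f * x * e ≤ (f * x * e) * (f * x * e) * (f * x * e) :=
      hcc.trans (mul_le_mul_left hcc (f * x * e))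
    have H1 : f * x * e ≤ (f * x * e) * (e * f) * (f * x * e) := by
      have t2 : (f * x * e) * (f * x * e) ≤ (f * x * (e * e)) * ((f * f) * x * e) :=
        mul_le_mul' (mul_le_mul_right he (f * x))
          (mul_le_mul_left (mul_le_mul_left hf x) e)
      simpa only [mul_assoc] using hcc.trans t2
    have H2 : e * f ≤ (e * f) * (f * x * e) * (e * f) := by
      have t : (e * f) * x * (e * f) ≤ (e * (f * f)) * x * ((e * e) * f) :=
        mul_le_mul' (mul_le_mul' (mul_le_mul_right hf e) (le_refl x))
          (mul_le_mul_left he f)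
      simpa only [mul_assoc] using hx1.trans t
    obtain ⟨⟨s, hs⟩, -, ⟨u, hu⟩, -⟩ :=
      h (f * x * e) (e * f) (f * x * e) ⟨H1, H2⟩ ⟨hccc, hccc⟩
    refine ⟨x * e * u * (f * x * e) * s * (f * x), ?_⟩
    have final : (e * f) * (f * x * e) * (e * f) ≤
        ((f * x * e) * u) * (f * x * e) * (s * (f * x * e)) :=
      mul_le_mul' (mul_le_mul' hu (le_refl (f * x * e))) hs
    simpa only [mul_assoc] using H2.trans final
  · -- backward direction
    intro h a a' a'' hp hq
    obtain ⟨h1, h2⟩ := hp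
    obtain ⟨h3, h4⟩ := hq
    have e1 : a * a' ≤ (a * a') * (a * a') := by
      simpa only [mul_assoc] using mul_le_mul_left h1 a'
    have e2 : a' * a ≤ (a' * a) * (a' * a) := by
      simpa only [mul_assoc] using mul_le_mul_left h2 a
    have e3 : a * a'' ≤ (a * a'') * (a * a'') := by
      simpa only [mul_assoc] using mul_le_mul_left h3 a''
    have e4 : a'' * a ≤ (a'' * a) * (a'' * a) := by
      simpa only [mul_assoc] using mul_le_mul_left h4 a
    refine ⟨?_, ?_, ?_, ?_⟩
    · -- ∃ s, a' ≤ s * a''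
      obtain ⟨x, hx⟩ := h (a * a'') (a * a') e3 e1
      refine ⟨a' * a * a' * x * a, ?_⟩
      calc a' ≤ a' * a * a' := h2
        _ ≤ a' * (a * a'' * a) * a' := mul_le_mul_left (mul_le_mul_right h3 a') a'
        _ ≤ a' * ((a * a') * x * (a * a'')) := by
            simpa only [mul_assoc] using mul_le_mul_right hx a'
        _ = a' * a * a' * x * a * a'' := by simp only [mul_assoc]
    · -- ∃ t, a'' ≤ t * a'
      obtain ⟨y, hy⟩ := h (a * a') (a * a'') e1 e3
      refine ⟨a'' * a * a'' * y * a, ?_⟩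
      calc a'' ≤ a'' * a * a'' := h4
        _ ≤ a'' * (a * a' * a) * a'' := mul_le_mul_left (mul_le_mul_right h1 a'') a''
        _ ≤ a'' * ((a * a'') * y * (a * a')) := by
            simpa only [mul_assoc] using mul_le_mul_right hy a''
        _ = a'' * a * a'' * y * a * a' := by simp only [mul_assoc]
    · -- ∃ u, a' ≤ a'' * u
      obtain ⟨z, hz⟩ := h (a' * a) (a'' * a) e2 e4
      refine ⟨a * z * a' * a * a', ?_⟩
      calc a' ≤ a' * a * a' := h2
        _ ≤ a' * (a * a'' * a) * a' := mul_le_mul_left (mul_le_mul_right h3 a') a'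
        _ ≤ ((a'' * a) * z * (a' * a)) * a' := by
            simpa only [mul_assoc] using mul_le_mul_left hz a'
        _ = a'' * (a * z * a' * a * a') := by simp only [mul_assoc]
    · -- ∃ v, a'' ≤ a' * v
      obtain ⟨w, hw⟩ := h (a'' * a) (a' * a) e4 e2
      refine ⟨a * w * a'' * a * a'', ?_⟩
      calc a'' ≤ a'' * a * a'' := h4
        _ ≤ a'' * (a * a' * a) * a'' := mul_le_mul_left (mul_le_mul_right h1 a'') a''
        _ ≤ ((a' * a) * w * (a'' * a)) * a'' := by
            simpa only [mul_assoc] using mul_le_mul_left hw a''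
        _ = a' * (a * w * a'' * a * a'') := by simp only [mul_assoc]
end

section
/- An H-commutative regular ordered semigroup is completely regular: if for all a, b ∈ S there exists x with ab ≤ bxa, and every a satisfies a ≤ asa for some s, then every a satisfies a ≤ a²ta² for some t ∈ S. -/
/-- an H-commutative regular ordered semigroup is completely regular. -/
theorem Hcommutative_regular_is_completely_regular {S : Type*} [Semigroup S]
    [PartialOrder S]
    [CovariantClass S S (· * ·) (· ≤ ·)]
    [CovariantClass S S (Function.swap (· * ·)) (· ≤ ·)]
    (hcomm : ∀ a b : S, ∃ x : S, a * b ≤ b * x * a)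
    (hreg : ∀ a : S, ∃ s : S, a ≤ a * s * a) :
    ∀ a : S, ∃ t : S, a ≤ a * a * t * (a * a) := by
  intro a
  obtain ⟨s, hs⟩ := hreg a
  obtain ⟨x, hx⟩ := hcomm a s
  obtain ⟨y, hy⟩ := hcomm s a
  refine ⟨y * s * s * s * x, ?_⟩
  have hA : a ≤ s * x * (a * a) := by
    calc a ≤ a * s * a := hs
    _ ≤ s * x * a * a := mul_le_mul_left hx a
    _ = s * x * (a * a) := by rw [mul_assoc]
  have hB : a ≤ a * a * y * s := by
    calc a ≤ a * s * a := hs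
    _ = a * (s * a) := by rw [mul_assoc]
    _ ≤ a * (a * y * s) := mul_le_mul_right hy a
    _ = a * a * y * s := by simp only [mul_assoc]
  calc a ≤ a * s * a := hs
  _ = a * s * a := rfl
  _ ≤ a * s * (s * x * (a * a)) := mul_le_mul_right hA (a * s)
  _ = a * (s * (s * x * (a * a))) := by rw [mul_assoc]
  _ ≤ a * a * y * s * (s * (s * x * (a * a))) := mul_le_mul_left hB _
  _ = a * a * (y * s * s * s * x) * (a * a) := by simp only [mul_assoc]
end

section
/- A semigroup F is completely regular if and only if the ordered semigroup P_f(F) of nonempty finite subsets of F is completely regular, i.e., for every A ∈ P_f(F) there is X ∈ P_f(F) with A ⊆ A²XA². -/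
open Pointwise

/-- `F` is a completely regular semigroup iff `P_f(F)` is a completely
regular ordered semigroup. -/
theorem completely_regular_iff_pf {F : Type*} [Semigroup F] [DecidableEq F] :
    (∀ a : F, ∃ x : F, a = a * a * x * (a * a)) ↔
    (∀ A : Finset F, A.Nonempty →
      ∃ X : Finset F, X.Nonempty ∧ A ⊆ A * A * X * (A * A)) := by
  constructor
  · intro h A hA
    choose f hf using h
    refine ⟨A.image f, hA.image f, ?_⟩
    intro a ha
    have : a = a * a * f a * (a * a) := hf a
    rw [this]
    exact Finset.mul_mem_mul (Finset.mul_mem_mul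
      (Finset.mul_mem_mul ha ha) (Finset.mem_image_of_mem f ha))
      (Finset.mul_mem_mul ha ha)
  · intro h a
    obtain ⟨X, hX, hsub⟩ := h {a} ⟨a, Finset.mem_singleton_self a⟩
    have ha := hsub (Finset.mem_singleton_self a)
    rw [Finset.mem_mul] at ha
    obtain ⟨y, hy, z, hz, hzy⟩ := ha
    rw [Finset.mem_mul] at hy
    obtain ⟨u, hu, x, hx, hux⟩ := hy
    rw [Finset.mem_mul] at hu hz
    obtain ⟨p, hp, q, hq, hpq⟩ := hu
    obtain ⟨r, hr, s, hs, hrs⟩ := hz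
    simp only [Finset.mem_singleton] at hp hq hr hs
    refine ⟨x, ?_⟩
    calc a = y * z := hzy.symm
      _ = u * x * (r * s) := by rw [hux, hrs]
      _ = p * q * x * (r * s) := by rw [hpq]
      _ = a * a * x * (a * a) := by rw [hp, hq, hr, hs]
end

section
/- If S is a completely regular ordered semigroup, then for every a ∈ S there exists x ∈ S such that a ≤ axa² and a ≤ a²xa. -/
/-- in a completely regular ordered semigroup, `a ≤ axa²` and
`a ≤ a²xa` for some common `x`. -/
theorem completely_regular_common_witness {S : Type*} [Semigroup S] [PartialOrder S]
    [CovariantClass S S (· * ·) (· ≤ ·)]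
    [CovariantClass S S (Function.swap (· * ·)) (· ≤ ·)]
    (hcr : ∀ a : S, ∃ t : S, a ≤ a * a * t * (a * a)) :
    ∀ a : S, ∃ x : S, a ≤ a * x * (a * a) ∧ a ≤ a * a * (x * a) := by
  intro a
  obtain ⟨t, ht⟩ := hcr a
  refine ⟨a * t * (a * a) * t * a, ?_, ?_⟩
  · calc a ≤ a * a * t * (a * a) := ht
      _ = (a * a * t) * (a * a) := by simp [mul_assoc]
      _ ≤ (a * a * t) * ((a * a * t * (a * a)) * a) :=
        mul_le_mul_right (mul_le_mul_left ht a) _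
      _ = a * (a * t * (a * a) * t * a) * (a * a) := by simp [mul_assoc]
  · calc a ≤ a * a * t * (a * a) := ht
      _ = a * (a * (t * (a * a))) := by simp [mul_assoc]
      _ ≤ a * ((a * a * t * (a * a)) * (t * (a * a))) :=
        mul_le_mul_right (mul_le_mul_left ht _) _
      _ = a * a * ((a * t * (a * a) * t * a) * a) := by simp [mul_assoc]
end

section
/- An ordered semigroup S is completely regular if and only if for every a ∈ S there exist x, y ∈ S with a ≤ a²xa and a ≤ aya². -/
/-- `S` is completely regular iff every `a` satisfies `a ≤ a²xa` and
`a ≤ aya²` for some `x, y`. -/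
theorem completely_regular_iff_two_sided {S : Type*} [Semigroup S] [PartialOrder S]
    [CovariantClass S S (· * ·) (· ≤ ·)]
    [CovariantClass S S (Function.swap (· * ·)) (· ≤ ·)] :
    (∀ a : S, ∃ t : S, a ≤ a * a * t * (a * a)) ↔
    (∀ a : S, ∃ x y : S, a ≤ a * a * x * a ∧ a ≤ a * y * (a * a)) := by
  constructor
  · intro h a
    obtain ⟨t, ht⟩ := h a
    exact ⟨t * a, a * t, by simpa [mul_assoc] using ht, by simpa [mul_assoc] using ht⟩
  · intro h a
    obtain ⟨x, y, h1, h2⟩ := h a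
    refine ⟨x * a * y, ?_⟩
    calc a ≤ a * a * x * a := h1
      _ ≤ a * a * x * (a * y * (a * a)) := mul_le_mul_right h2 _
      _ = a * a * (x * a * y) * (a * a) := by simp [mul_assoc]
end

section
/- An ordered semigroup S is completely regular if and only if S is regular and for all a ∈ S there exist x, y ∈ S with a ≤ a²x and a ≤ ya². -/
/-- `S` is completely regular iff it is regular and
`a ∈ (a²S] ∩ (Sa²]` for every `a`. -/
theorem completely_regular_iff_regular_and {S : Type*} [Semigroup S] [PartialOrder S]
    [CovariantClass S S (· * ·) (· ≤ ·)]
    [CovariantClass S S (Function.swap (· * ·)) (· ≤ ·)] :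
    (∀ a : S, ∃ t : S, a ≤ a * a * t * (a * a)) ↔
    ((∀ a : S, ∃ s : S, a ≤ a * s * a) ∧
      (∀ a : S, ∃ x y : S, a ≤ a * a * x ∧ a ≤ y * (a * a))) := by
  constructor
  · intro h
    refine ⟨fun a => ?_, fun a => ?_⟩
    · obtain ⟨t, ht⟩ := h a
      exact ⟨a * t * a, by simpa [mul_assoc] using ht⟩
    · obtain ⟨t, ht⟩ := h a
      exact ⟨t * (a * a), a * a * t, by simpa [mul_assoc] using ht,
        by simpa [mul_assoc] using ht⟩
  · rintro ⟨hr, hx⟩ a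
    obtain ⟨s, hs⟩ := hr a
    obtain ⟨x, y, hx1, hy1⟩ := hx a
    refine ⟨x * s * y, ?_⟩
    calc a ≤ a * s * a := hs
      _ ≤ a * a * x * s * (y * (a * a)) :=
        mul_le_mul' (mul_le_mul' hx1 le_rfl) hy1
      _ = a * a * (x * s * y) * (a * a) := by simp only [mul_assoc]
end

section
/- An ordered semigroup S is completely regular if and only if for every a ∈ S there exists an inverse a' of a (a ≤ aa'a and a' ≤ a'aa') together with u, v ∈ S such that aa' ≤ a'ua and a'a ≤ ava'. -/
/-- `S` is completely regular iff every `a` has an inverse `a'` with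
`aa' ≤ a'ua` and `a'a ≤ ava'` for some `u, v`. -/
theorem completely_regular_iff_inverse_Hcommuting {S : Type*} [Semigroup S]
    [PartialOrder S]
    [CovariantClass S S (· * ·) (· ≤ ·)]
    [CovariantClass S S (Function.swap (· * ·)) (· ≤ ·)] :
    (∀ a : S, ∃ t : S, a ≤ a * a * t * (a * a)) ↔
    (∀ a : S, ∃ a' u v : S,
      (a ≤ a * a' * a ∧ a' ≤ a' * a * a') ∧
      a * a' ≤ a' * u * a ∧ a' * a ≤ a * v * a') := by
  constructor
  · intro hcr a
    obtain ⟨t, h⟩ := hcr a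
    refine ⟨a * (a * (t * (a * (a * (t * (a * (a * (t * (a * a))))))))),
            a * (a * (a * (a * (t * (a * (a * (t * (a * (a * (t * a)))))))))),
            a * (t * (a * (a * (t * (a * (a * (t * (a * (a * (a * a)))))))))),
            ⟨?_, ?_⟩, ?_, ?_⟩
    · -- a ≤ a * a' * a
      simp only [mul_assoc]
      calc a ≤ a * (a * (t * (a * a))) := by simpa only [mul_assoc] using h
        _ ≤ a * (a * (t * (a * (a * (t * (a * (a * a))))))) := by
            simpa only [mul_assoc] using mul_le_mul_left (mul_le_mul_right h (a * (a * t))) (a)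
        _ ≤ a * (a * (a * (t * (a * (a * (t * (a * (a * (t * (a * (a * a))))))))))) := by
            simpa only [mul_assoc] using mul_le_mul_left (mul_le_mul_right h (a)) (t * (a * (a * (t * (a * (a * a))))))
    · -- a' ≤ a' * a * a'
      simp only [mul_assoc]
      calc a * (a * (t * (a * (a * (t * (a * (a * (t * (a * a))))))))) ≤ a * (a * (t * (a * (a * (t * (a * (a * (t * (a * (a * (a * (t * (a * a))))))))))))) := by
            simpa only [mul_assoc] using mul_le_mul_right h (a * (a * (t * (a * (a * (t * (a * (a * (t * a)))))))))
        _ ≤ a * (a * (t * (a * (a * (t * (a * (a * (t * (a * (a * (a * (a * (t * (a * (a * (t * (a * a))))))))))))))))) := by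
            simpa only [mul_assoc] using mul_le_mul_left (mul_le_mul_right h (a * (a * (t * (a * (a * (t * (a * (a * (t * (a * a))))))))))) (t * (a * a))
        _ ≤ a * (a * (t * (a * (a * (t * (a * (a * (t * (a * (a * (a * (a * (a * (t * (a * (a * (t * (a * (a * (t * (a * a))))))))))))))))))))) := by
            simpa only [mul_assoc] using mul_le_mul_left (mul_le_mul_right h (a * (a * (t * (a * (a * (t * (a * (a * (t * (a * (a * a)))))))))))) (t * (a * (a * (t * (a * a)))))
    · -- a * a' ≤ a' * u * a
      simp only [mul_assoc]
      calc a * (a * (a * (t * (a * (a * (t * (a * (a * (t * (a * a)))))))))) ≤ a * (a * (t * (a * (a * (a * (a * (t * (a * (a * (t * (a * (a * (t * (a * a)))))))))))))) := by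
            simpa only [mul_assoc] using mul_le_mul_left h (a * (a * (t * (a * (a * (t * (a * (a * (t * (a * a))))))))))
        _ ≤ a * (a * (t * (a * (a * (t * (a * (a * (a * (a * (a * (t * (a * (a * (t * (a * (a * (t * (a * a)))))))))))))))))) := by
            simpa only [mul_assoc] using mul_le_mul_left (mul_le_mul_right h (a * (a * t))) (a * (a * (a * (t * (a * (a * (t * (a * (a * (t * (a * a)))))))))))
        _ ≤ a * (a * (t * (a * (a * (t * (a * (a * (t * (a * (a * (a * (a * (a * (a * (t * (a * (a * (t * (a * (a * (t * (a * a)))))))))))))))))))))) := by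
            simpa only [mul_assoc] using mul_le_mul_left (mul_le_mul_right h (a * (a * (t * (a * (a * t)))))) (a * (a * (a * (a * (t * (a * (a * (t * (a * (a * (t * (a * a))))))))))))
    · -- a' * a ≤ a * v * a'
      simp only [mul_assoc]
      calc a * (a * (t * (a * (a * (t * (a * (a * (t * (a * (a * a)))))))))) ≤ a * (a * (t * (a * (a * (t * (a * (a * (t * (a * (a * (a * (a * (t * (a * a)))))))))))))) := by
            simpa only [mul_assoc] using mul_le_mul_right h (a * (a * (t * (a * (a * (t * (a * (a * (t * (a * a))))))))))
        _ ≤ a * (a * (t * (a * (a * (t * (a * (a * (t * (a * (a * (a * (a * (a * (t * (a * (a * (t * (a * a)))))))))))))))))) := by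
            simpa only [mul_assoc] using mul_le_mul_left (mul_le_mul_right h (a * (a * (t * (a * (a * (t * (a * (a * (t * (a * (a * a)))))))))))) (t * (a * a))
        _ ≤ a * (a * (t * (a * (a * (t * (a * (a * (t * (a * (a * (a * (a * (a * (a * (t * (a * (a * (t * (a * (a * (t * (a * a)))))))))))))))))))))) := by
            simpa only [mul_assoc] using mul_le_mul_left (mul_le_mul_right h (a * (a * (t * (a * (a * (t * (a * (a * (t * (a * (a * (a * a))))))))))))) (t * (a * (a * (t * (a * a)))))
  · intro hinv a
    obtain ⟨a', u, v, ⟨h1, h2⟩, h3, h4⟩ := hinv a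
    refine ⟨v * a' * a' * u * a' * u, ?_⟩
    simp only [mul_assoc]
    calc a ≤ a * (a' * a) := by simpa only [mul_assoc] using h1
      _ ≤ a * (a * (v * a')) := by simpa only [mul_assoc] using mul_le_mul_right h4 a
      _ ≤ a * (a * (v * (a' * (a * a')))) := by
          simpa only [mul_assoc] using mul_le_mul_right h2 (a * (a * v))
      _ ≤ a * (a * (v * (a' * (a' * (u * a))))) := by
          simpa only [mul_assoc] using mul_le_mul_right h3 (a * (a * (v * a')))
      _ ≤ a * (a * (v * (a' * (a' * (u * (a * (a' * a))))))) := by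
          simpa only [mul_assoc] using mul_le_mul_right h1 (a * (a * (v * (a' * (a' * u)))))
      _ ≤ a * (a * (v * (a' * (a' * (u * (a' * (u * (a * a)))))))) := by
          simpa only [mul_assoc] using mul_le_mul_left (mul_le_mul_right h3 (a * (a * (v * (a' * (a' * u)))))) a
end

section
/- If S is an ordered semigroup and a ∈ S satisfies a ≤ a²ta² for some t, then e = a²ta²ta² is an ordered idempotent with a ≤ ea and a ≤ ae. -/
/-- if `a ≤ a²ta²` then `e = a²ta²ta²` is an ordered idempotent with
`a ≤ ea` and `a ≤ ae`. -/
theorem ordered_idempotent_from_cr {S : Type*} [Semigroup S] [PartialOrder S]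
    [CovariantClass S S (· * ·) (· ≤ ·)]
    [CovariantClass S S (Function.swap (· * ·)) (· ≤ ·)]
    (a t : S) (h : a ≤ a * a * t * (a * a)) :
    (a * a * t * (a * a) * t * (a * a)) ≤
        (a * a * t * (a * a) * t * (a * a)) * (a * a * t * (a * a) * t * (a * a)) ∧
      a ≤ (a * a * t * (a * a) * t * (a * a)) * a ∧
      a ≤ a * (a * a * t * (a * a) * t * (a * a)) := by
  set e := a * a * t * (a * a) * t * (a * a) with he
  have h1 : a ≤ e * a := by
    calc a ≤ a * a * t * (a * a) := h
      _ ≤ a * a * t * ((a * a * t * (a * a)) * a) :=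
          mul_le_mul_right (mul_le_mul_left h a) _
      _ = e * a := by simp only [he, mul_assoc]
  have h2 : a ≤ a * e := by
    calc a ≤ a * a * t * (a * a) := h
      _ ≤ a * (a * a * t * (a * a)) * t * (a * a) :=
          mul_le_mul_left (mul_le_mul_left (mul_le_mul_right h a) t) _
      _ = a * e := by simp only [he, mul_assoc]
  refine ⟨?_, h1, h2⟩
  calc e = a * (a * t * (a * a) * t * (a * a)) := by simp only [he, mul_assoc]
    _ ≤ (e * a) * (a * t * (a * a) * t * (a * a)) := mul_le_mul_left h1 _
    _ = e * e := by simp only [he, mul_assoc]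
end

section
/- In a completely regular ordered semigroup S, for every ordered idempotent e the set G_e = {a ∈ S : a ≤ ea, a ≤ ae, and e ≤ za, e ≤ az for some z ∈ S} is a group like ordered subsemigroup of S (closed under multiplication, and for all x, y ∈ G_e there exist g, g' ∈ G_e with x ≤ gy and x ≤ yg'). -/
/-- in a completely regular ordered semigroup, for each ordered
idempotent `e` the set `G_e` is a group like ordered subsemigroup. -/
theorem Ge_grouplike_subsemigroup {S : Type*} [Semigroup S] [PartialOrder S]
    [CovariantClass S S (· * ·) (· ≤ ·)]
    [CovariantClass S S (Function.swap (· * ·)) (· ≤ ·)]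
    (hcr : ∀ a : S, ∃ t : S, a ≤ a * a * t * (a * a))
    (e : S) (he : e ≤ e * e) :
    let Ge : Set S := {a : S | a ≤ e * a ∧ a ≤ a * e ∧ ∃ z : S, e ≤ z * a ∧ e ≤ a * z}
    (∀ a ∈ Ge, ∀ b ∈ Ge, a * b ∈ Ge) ∧
    (∀ x ∈ Ge, ∀ y ∈ Ge,
      (∃ g ∈ Ge, x ≤ g * y) ∧ (∃ g' ∈ Ge, x ≤ y * g')) := by
  intro Ge
  have closure : ∀ a ∈ Ge, ∀ b ∈ Ge, a * b ∈ Ge := by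
    rintro a ⟨ha1, ha2, za, hza1, hza2⟩ b ⟨hb1, hb2, zb, hzb1, hzb2⟩
    refine ⟨?_, ?_, zb * za, ?_, ?_⟩
    · calc a * b ≤ (e * a) * b := mul_le_mul_left ha1 b
        _ = e * (a * b) := mul_assoc ..
    · calc a * b ≤ a * (b * e) := mul_le_mul_right hb2 a
        _ = a * b * e := (mul_assoc ..).symm
    · calc e ≤ zb * b := hzb1
        _ ≤ zb * (e * b) := mul_le_mul_right hb1 zb
        _ ≤ zb * ((za * a) * b) := mul_le_mul_right (mul_le_mul_left hza1 b) zb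
        _ = zb * za * (a * b) := by simp only [mul_assoc]
    · calc e ≤ a * za := hza2
        _ ≤ (a * e) * za := mul_le_mul_left ha2 za
        _ ≤ (a * (b * zb)) * za := mul_le_mul_left (mul_le_mul_right hzb2 a) za
        _ = a * b * (zb * za) := by simp only [mul_assoc]
  -- the "inverse" of an element of Ge built from its witness is in Ge
  have inv_mem : ∀ y ∈ Ge, ∀ z : S, e ≤ z * y → e ≤ y * z → e * z * e ∈ Ge := by
    rintro y ⟨hy1, hy2, _⟩ z hz1 hz2
    refine ⟨?_, ?_, e * y * e, ?_, ?_⟩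
    · calc e * z * e = e * (z * e) := mul_assoc ..
        _ ≤ (e * e) * (z * e) := mul_le_mul_left he (z * e)
        _ = e * (e * z * e) := by simp only [mul_assoc]
    · calc e * z * e ≤ (e * z) * (e * e) := mul_le_mul_right he (e * z)
        _ = (e * z * e) * e := by simp only [mul_assoc]
    · -- e ≤ (e * y * e) * (e * z * e)
      have hm : e ≤ y * (e * e) * z := by
        calc e ≤ y * z := hz2
          _ ≤ (y * e) * z := mul_le_mul_left hy2 z
          _ ≤ ((y * e) * e) * z := mul_le_mul_left (mul_le_mul_left hy2 e) z
          _ = y * (e * e) * z := by simp only [mul_assoc]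
      calc e ≤ e * e := he
        _ ≤ e * (e * e) := mul_le_mul_right he e
        _ ≤ e * ((y * (e * e) * z) * e) :=
            mul_le_mul_right (mul_le_mul_left hm e) e
        _ = (e * y * e) * (e * z * e) := by simp only [mul_assoc]
    · -- e ≤ (e * z * e) * (e * y * e)
      have hm : e ≤ z * (e * e) * y := by
        calc e ≤ z * y := hz1
          _ ≤ z * (e * y) := mul_le_mul_right hy1 z
          _ ≤ z * (e * (e * y)) := mul_le_mul_right (mul_le_mul_right hy1 e) z
          _ = z * (e * e) * y := by simp only [mul_assoc]
      calc e ≤ e * e := he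
        _ ≤ e * (e * e) := mul_le_mul_right he e
        _ ≤ e * ((z * (e * e) * y) * e) :=
            mul_le_mul_right (mul_le_mul_left hm e) e
        _ = (e * z * e) * (e * y * e) := by simp only [mul_assoc]
  refine ⟨closure, ?_⟩
  rintro x hx y hy
  obtain ⟨hx1, hx2, zx, hzx1, hzx2⟩ := hx
  obtain ⟨hy1, hy2, z, hz1, hz2⟩ := hy
  have hinv : e * z * e ∈ Ge := inv_mem y ⟨hy1, hy2, z, hz1, hz2⟩ z hz1 hz2
  constructor
  · refine ⟨x * (e * z * e), closure x ⟨hx1, hx2, zx, hzx1, hzx2⟩ _ hinv, ?_⟩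
    calc x ≤ x * e := hx2
      _ ≤ x * (e * e) := mul_le_mul_right he x
      _ ≤ x * (e * (z * y)) := mul_le_mul_right (mul_le_mul_right hz1 e) x
      _ ≤ x * (e * (z * (e * y))) :=
          mul_le_mul_right (mul_le_mul_right (mul_le_mul_right hy1 z) e) x
      _ = (x * (e * z * e)) * y := by simp only [mul_assoc]
  · refine ⟨(e * z * e) * x, closure _ hinv x ⟨hx1, hx2, zx, hzx1, hzx2⟩, ?_⟩
    calc x ≤ e * x := hx1
      _ ≤ e * (e * x) := mul_le_mul_right hx1 e
      _ ≤ ((y * e) * z) * (e * x) :=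
          mul_le_mul_left (le_trans hz2 (mul_le_mul_left hy2 z)) (e * x)
      _ = y * ((e * z * e) * x) := by simp only [mul_assoc]
end

section
/- Let S be a completely regular ordered semigroup. Then Green's relation J, defined by a J b iff (S¹aS¹] = (S¹bS¹] (equivalently, a ≤ xby and b ≤ uav for some x,y,u,v ∈ S, using the characterization with S itself since a J a²), is the least complete semilattice congruence on S. In particular: J is a congruence, a J a², ab J ba for all a, b, and a ≤ b implies a J ab; and J is contained in every complete semilattice congruence. -/
set_option linter.unusedSectionVars false

section Aux

variable {S : Type*} [Semigroup S] [PartialOrder S]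
    [CovariantClass S S (· * ·) (· ≤ ·)]
    [CovariantClass S S (Function.swap (· * ·)) (· ≤ ·)]

/-- Cyclic lemma: `p*q ≤ X*(q*p)*Y`. -/
private lemma cyc (hcr : ∀ a : S, ∃ t : S, a ≤ a * a * t * (a * a)) (p q : S) :
    ∃ x y : S, p * q ≤ x * (q * p) * y := by
  obtain ⟨t, ht⟩ := hcr (p * q)
  exact ⟨p, q * t * (p * q * (p * q)), ht.trans (le_of_eq (by simp [mul_assoc]))⟩

private lemma sq1 (hcr : ∀ a : S, ∃ t : S, a ≤ a * a * t * (a * a)) (a : S) :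
    ∃ x y : S, a ≤ x * (a * a) * y := by
  obtain ⟨t, ht⟩ := hcr a
  have haw : a ≤ a * (a * (t * (a * a))) := ht.trans (le_of_eq (by simp [mul_assoc]))
  refine ⟨a * a * t, a * (t * (a * a)), ht.trans ?_⟩
  calc a * a * t * (a * a) ≤ a * a * t * (a * (a * (a * (t * (a * a))))) :=
        mul_le_mul_right (mul_le_mul_right haw a) _
    _ = a * a * t * (a * a) * (a * (t * (a * a))) := by simp [mul_assoc]

private lemma sq2 (hcr : ∀ a : S, ∃ t : S, a ≤ a * a * t * (a * a)) (a : S) :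
    ∃ u v : S, a * a ≤ u * a * v := by
  obtain ⟨t, ht⟩ := hcr a
  have hL : a ≤ a * a * t * a * a := ht.trans (le_of_eq (by simp [mul_assoc]))
  exact ⟨a * a * t * a, a, mul_le_mul_left hL a⟩

/-- left compatibility half -/
private lemma compatL (hcr : ∀ a : S, ∃ t : S, a ≤ a * a * t * (a * a))
    {a b : S} (c : S) (h : ∃ x y : S, a ≤ x * b * y) :
    ∃ X Y : S, c * a ≤ X * (c * b) * Y := by
  obtain ⟨x, y, hxy⟩ := h
  obtain ⟨X₁, Y₁, h1⟩ := cyc hcr c a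
  obtain ⟨X₂, Y₂, h3⟩ := cyc hcr b (y * c)
  refine ⟨X₁ * (x * (X₂ * y)), Y₂ * Y₁, ?_⟩
  calc c * a ≤ X₁ * (a * c) * Y₁ := h1
    _ ≤ X₁ * (x * b * y * c) * Y₁ :=
        mul_le_mul_left (mul_le_mul_right (mul_le_mul_left hxy c) X₁) Y₁
    _ = X₁ * (x * (b * (y * c))) * Y₁ := by simp [mul_assoc]
    _ ≤ X₁ * (x * (X₂ * (y * c * b) * Y₂)) * Y₁ :=
        mul_le_mul_left (mul_le_mul_right (mul_le_mul_right h3 x) X₁) Y₁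
    _ = X₁ * (x * (X₂ * y)) * (c * b) * (Y₂ * Y₁) := by simp [mul_assoc]

/-- right compatibility half -/
private lemma compatR (hcr : ∀ a : S, ∃ t : S, a ≤ a * a * t * (a * a))
    {a b : S} (c : S) (h : ∃ x y : S, a ≤ x * b * y) :
    ∃ X Y : S, a * c ≤ X * (b * c) * Y := by
  obtain ⟨x, y, hxy⟩ := h
  obtain ⟨X₁, Y₁, h1⟩ := cyc hcr a c
  obtain ⟨X₂, Y₂, h3⟩ := cyc hcr (c * x) b
  refine ⟨X₁ * X₂, x * (Y₂ * (y * Y₁)), ?_⟩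
  calc a * c ≤ X₁ * (c * a) * Y₁ := h1
    _ ≤ X₁ * (c * (x * b * y)) * Y₁ :=
        mul_le_mul_left (mul_le_mul_right (mul_le_mul_right hxy c) X₁) Y₁
    _ = X₁ * (c * x * b * y) * Y₁ := by simp [mul_assoc]
    _ ≤ X₁ * (X₂ * (b * (c * x)) * Y₂ * y) * Y₁ :=
        mul_le_mul_left (mul_le_mul_right (mul_le_mul_left h3 y) X₁) Y₁
    _ = X₁ * X₂ * (b * c) * (x * (Y₂ * (y * Y₁))) := by simp [mul_assoc]

private lemma least_aux {ρ : S → S → Prop} (hE : Equivalence ρ)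
    (hcomp : ∀ a b c : S, ρ a b → ρ (c * a) (c * b) ∧ ρ (a * c) (b * c))
    (hidem : ∀ a : S, ρ a (a * a))
    (hcomm : ∀ a b : S, ρ (a * b) (b * a))
    (hC : ∀ a b : S, a ≤ b → ρ a (a * b))
    {a b x y : S} (h : a ≤ x * b * y) : ρ a (a * b) := by
  have n1 : ρ a (a * (x * (b * y))) := by
    simpa [mul_assoc] using hC a (x * b * y) h
  have n2 : ρ (a * (x * (b * y))) (a * (x * (y * b))) := by
    simpa [mul_assoc] using (hcomp (b * y) (y * b) (a * x) (hcomm b y)).1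
  have n3 : ρ (a * (x * (y * b))) (a * (x * (y * (b * b)))) := by
    simpa [mul_assoc] using (hcomp b (b * b) (a * (x * y)) (hidem b)).1
  have n4 : ρ (a * (x * (y * (b * b)))) (a * (x * (b * (y * b)))) := by
    simpa [mul_assoc] using
      (hcomp (a * x * (y * b)) (a * x * (b * y)) b
        (hcomp (y * b) (b * y) (a * x) (hcomm y b)).1).2
  have n5 : ρ (a * b) (a * (x * (b * (y * b)))) := by
    simpa [mul_assoc] using (hcomp a (a * (x * b * y)) b (hC a (x * b * y) h)).2
  exact hE.trans (hE.trans n1 (hE.trans n2 (hE.trans n3 n4))) (hE.symm n5)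

end Aux

/-- in a completely regular ordered semigroup, the relation `J`
(`a J b` iff `a ≤ xby` and `b ≤ uav` for some `x, y, u, v`) is the least complete
semilattice congruence. -/
theorem J_least_complete_semilattice_congruence {S : Type*} [Semigroup S]
    [PartialOrder S]
    [CovariantClass S S (· * ·) (· ≤ ·)]
    [CovariantClass S S (Function.swap (· * ·)) (· ≤ ·)]
    (hcr : ∀ a : S, ∃ t : S, a ≤ a * a * t * (a * a)) :
    let J : S → S → Prop := fun a b =>
      (∃ x y : S, a ≤ x * b * y) ∧ (∃ u v : S, b ≤ u * a * v)
    Equivalence J ∧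
    (∀ a b c : S, J a b → J (c * a) (c * b) ∧ J (a * c) (b * c)) ∧
    (∀ a : S, J a (a * a)) ∧
    (∀ a b : S, J (a * b) (b * a)) ∧
    (∀ a b : S, a ≤ b → J a (a * b)) ∧
    (∀ ρ : S → S → Prop, Equivalence ρ →
      (∀ a b c : S, ρ a b → ρ (c * a) (c * b) ∧ ρ (a * c) (b * c)) →
      (∀ a : S, ρ a (a * a)) →
      (∀ a b : S, ρ (a * b) (b * a)) →
      (∀ a b : S, a ≤ b → ρ a (a * b)) →
      ∀ a b : S, J a b → ρ a b) := by
  intro J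
  have hrefl : ∀ a : S, ∃ x y : S, a ≤ x * a * y := by
    intro a
    obtain ⟨t, ht⟩ := hcr a
    exact ⟨a * a * t, a, ht.trans (le_of_eq (by simp [mul_assoc]))⟩
  refine ⟨⟨fun a => ⟨hrefl a, hrefl a⟩, fun h => ⟨h.2, h.1⟩, ?_⟩, ?_, ?_, ?_, ?_, ?_⟩
  · -- transitivity
    rintro a b c ⟨⟨x, y, hxy⟩, ⟨u, v, huv⟩⟩ ⟨⟨x', y', hxy'⟩, ⟨u', v', huv'⟩⟩
    constructor
    · refine ⟨x * x', y' * y, hxy.trans ?_⟩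
      calc x * b * y ≤ x * (x' * c * y') * y :=
            mul_le_mul_left (mul_le_mul_right hxy' x) y
        _ = x * x' * c * (y' * y) := by simp [mul_assoc]
    · refine ⟨u' * u, v * v', huv'.trans ?_⟩
      calc u' * b * v' ≤ u' * (u * a * v) * v' :=
            mul_le_mul_left (mul_le_mul_right huv u') v'
        _ = u' * u * a * (v * v') := by simp [mul_assoc]
  · -- congruence
    rintro a b c ⟨h1, h2⟩
    exact ⟨⟨compatL hcr c h1, compatL hcr c h2⟩, ⟨compatR hcr c h1, compatR hcr c h2⟩⟩
  · -- a J a²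
    exact fun a => ⟨sq1 hcr a, sq2 hcr a⟩
  · -- ab J ba
    exact fun a b => ⟨cyc hcr a b, cyc hcr b a⟩
  · -- complete
    intro a b hab
    obtain ⟨X, Y, hX⟩ := sq1 hcr a
    constructor
    · exact ⟨X, Y, hX.trans
        (mul_le_mul_left (mul_le_mul_right (mul_le_mul_right hab a) X) Y)⟩
    · obtain ⟨t, ht⟩ := hcr a
      have hL : a ≤ a * a * t * a * a := ht.trans (le_of_eq (by simp [mul_assoc]))
      exact ⟨a * a * t * a, b, mul_le_mul_left hL b⟩
  · -- leastness
    rintro ρ hE hcomp hidem hcomm hC a b ⟨⟨x, y, h1⟩, ⟨u, v, h2⟩⟩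
    have hA : ρ a (a * b) := least_aux hE hcomp hidem hcomm hC h1
    have hB : ρ b (b * a) := least_aux hE hcomp hidem hcomm hC h2
    exact hE.trans hA (hE.trans (hcomm a b) (hE.symm hB))
end

section
/- A regular ordered semigroup S is Clifford (for all a ∈ S and all ordered idempotents e there exist u, v ∈ S with ae ≤ eua and ea ≤ ave) if and only if it is H-commutative, i.e., for all a, b ∈ S there exists x ∈ S with ab ≤ bxa. -/
/-- a regular ordered semigroup is Clifford iff it is H-commutative. -/
theorem clifford_iff_Hcommutative {S : Type*} [Semigroup S] [PartialOrder S]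
    [CovariantClass S S (· * ·) (· ≤ ·)]
    [CovariantClass S S (Function.swap (· * ·)) (· ≤ ·)]
    (hreg : ∀ a : S, ∃ s : S, a ≤ a * s * a) :
    (∀ a e : S, e ≤ e * e →
      (∃ u : S, a * e ≤ e * u * a) ∧ (∃ v : S, e * a ≤ a * v * e)) ↔
    (∀ a b : S, ∃ x : S, a * b ≤ b * x * a) := by
  constructor
  · intro h a b
    obtain ⟨p, hp⟩ := hreg a
    obtain ⟨q, hq⟩ := hreg b
    have he : (p * a) ≤ (p * a) * (p * a) := by
      have := mul_le_mul_right hp p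
      calc p * a ≤ p * (a * p * a) := this
        _ = (p * a) * (p * a) := by simp [mul_assoc]
    have hf : (b * q) ≤ (b * q) * (b * q) := by
      have := mul_le_mul_left hq q
      calc b * q ≤ (b * q * b) * q := this
        _ = (b * q) * (b * q) := by simp [mul_assoc]
    obtain ⟨u, hu⟩ := (h a (b * q) hf).1
    obtain ⟨v, hv⟩ := (h b (p * a) he).2
    have h1 : a * b ≤ a * b * v * p * a := by
      calc a * b ≤ (a * p * a) * b := mul_le_mul_left hp b
        _ = a * ((p * a) * b) := by simp [mul_assoc]
        _ ≤ a * (b * v * (p * a)) := mul_le_mul_right hv a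
        _ = a * b * v * p * a := by simp [mul_assoc]
    refine ⟨q * u * (a * b * v * p), ?_⟩
    calc a * b ≤ a * (b * q * b) := mul_le_mul_right hq a
      _ = (a * (b * q)) * b := by simp [mul_assoc]
      _ ≤ ((b * q) * u * a) * b := mul_le_mul_left hu b
      _ = b * q * u * (a * b) := by simp [mul_assoc]
      _ ≤ b * q * u * (a * b * v * p * a) := mul_le_mul_right h1 _
      _ = b * (q * u * (a * b * v * p)) * a := by simp [mul_assoc]
  · intro h a e _
    obtain ⟨u, hu⟩ := h a e
    obtain ⟨v, hv⟩ := h e a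
    exact ⟨⟨u, hu⟩, ⟨v, hv⟩⟩
end
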